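/- If (X, ρ) is a complete metric space with ρ ≤ 2, then the metric space (X̂, ρ̂) is complete: every Cauchy sequence in X̂ converges, either to a point of [0,∞) × X (when the first coordinates g(sₙ) stay bounded away from 1 along a limit) or to Δ∞ (when g(sₙ) → 1, i.e., sₙ → ∞). -/

import Mathlib

open scoped NNReal ENNReal

/-- `g(s) = s/(s+1)`, mapping `[0,∞)` into `[0,1)`. -/
noncomputable def g (s : ℝ≥0) : ℝ := (s : ℝ) / ((s : ℝ) + 1)

/-- The metric `ρ̂` on `X̂ = ([0,∞) × X) ∪ {Δ∞}`, where `Δ∞` is encoded as `none`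
and a pair `(s, x)` as `some (s, x)`. -/
noncomputable def hatDist {X : Type*} [MetricSpace X] :
    Option (ℝ≥0 × X) → Option (ℝ≥0 × X) → ℝ
  | some p, some q => dist p.2 q.2 * (1 - max (g p.1) (g q.1)) + |g p.1 - g q.1|
  | some p, none => 1 - g p.1
  | none, some q => 1 - g q.1
  | none, none => 0

/-!
The level `g(s) ∈ [0, 1)` of a point, extended by `1` at `Δ∞`, is `1`-Lipschitz for `ρ̂`, so
along a Cauchy sequence it converges to some `L ≤ 1`. If `L = 1`, the sequence tends to `Δ∞`
since `ρ̂(·, Δ∞) = 1 - level`. If `L < 1`, the sequence eventually stays at levels below some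
`c < 1`, where `ρ̂` dominates `(1 - c) ρ` on the `X`-components; these are then Cauchy in `X`, and
the sequence converges to `(g⁻¹(L), lim xₙ)`.
-/

open Filter Topology

lemma g_nonneg (s : ℝ≥0) : 0 ≤ g s := by
  unfold g; positivity

lemma g_lt_one (s : ℝ≥0) : g s < 1 := by
  unfold g
  rw [div_lt_one (by positivity)]
  linarith

lemma g_toNNReal_div_one_sub {L : ℝ} (h0 : 0 ≤ L) (h1 : L < 1) :
    g (L / (1 - L)).toNNReal = L := by
  have h1' : 1 - L ≠ 0 := by linarith
  rw [g, Real.coe_toNNReal _ (div_nonneg h0 (by linarith))]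
  field_simp
  ring

noncomputable def level {X : Type*} : Option (ℝ≥0 × X) → ℝ
  | some p => g p.1
  | none => 1

lemma level_nonneg {X : Type*} (p : Option (ℝ≥0 × X)) : 0 ≤ level p := by
  cases p with
  | none => exact zero_le_one
  | some p => exact g_nonneg p.1

lemma level_le_one {X : Type*} (p : Option (ℝ≥0 × X)) : level p ≤ 1 := by
  cases p with
  | none => exact le_rfl
  | some p => exact (g_lt_one p.1).le

section hatDist

variable {X : Type*} [MetricSpace X]

lemma hatDist_none_right (p : Option (ℝ≥0 × X)) : hatDist p none = 1 - level p := by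
  cases p <;> simp [hatDist, level]

lemma abs_level_sub_le_hatDist (p q : Option (ℝ≥0 × X)) :
    |level p - level q| ≤ hatDist p q := by
  cases p with
  | none =>
    cases q with
    | none => simp [hatDist, level]
    | some q =>
      simp only [hatDist, level]
      rw [abs_of_nonneg (by linarith [g_lt_one q.1])]
  | some p =>
    cases q with
    | none =>
      simp only [hatDist, level]
      rw [abs_of_nonpos (by linarith [g_lt_one p.1])]
      linarith
    | some q =>
      simp only [hatDist, level]
      have hmax : max (g p.1) (g q.1) ≤ 1 := max_le (g_lt_one _).le (g_lt_one _).le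
      nlinarith [dist_nonneg (x := p.2) (y := q.2)]

lemma dist_mul_le_hatDist {p q : ℝ≥0 × X} {c : ℝ} (hp : g p.1 ≤ c) (hq : g q.1 ≤ c) :
    dist p.2 q.2 * (1 - c) ≤ hatDist (some p) (some q) := by
  simp only [hatDist]
  have : dist p.2 q.2 * (1 - c) ≤ dist p.2 q.2 * (1 - max (g p.1) (g q.1)) :=
    mul_le_mul_of_nonneg_left (by linarith [max_le hp hq]) dist_nonneg
  linarith [abs_nonneg (g p.1 - g q.1)]

lemma hatDist_some_le (p q : ℝ≥0 × X) :
    hatDist (some p) (some q) ≤ dist p.2 q.2 + |g p.1 - g q.1| := by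
  simp only [hatDist]
  have : dist p.2 q.2 * (1 - max (g p.1) (g q.1)) ≤ dist p.2 q.2 :=
    mul_le_of_le_one_right dist_nonneg (by linarith [g_nonneg p.1, le_max_left (g p.1) (g q.1)])
  linarith

end hatDist

section completeness

variable {X : Type*} [MetricSpace X] [MetricSpace (Option (ℝ≥0 × X))]

lemma lipschitzWith_level (hm : ∀ p q : Option (ℝ≥0 × X), dist p q = hatDist p q) :
    LipschitzWith 1 (level : Option (ℝ≥0 × X) → ℝ) :=
  LipschitzWith.of_dist_le_mul fun p q => by
    simpa [Real.dist_eq, hm] using abs_level_sub_le_hatDist p q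

lemma tendsto_none_of_tendsto_level_one
    (hm : ∀ p q : Option (ℝ≥0 × X), dist p q = hatDist p q) {u : ℕ → Option (ℝ≥0 × X)}
    (hu : Tendsto (fun n => level (u n)) atTop (𝓝 1)) : Tendsto u atTop (𝓝 none) := by
  rw [tendsto_iff_dist_tendsto_zero]
  simp only [hm, hatDist_none_right]
  simpa using (tendsto_const_nhds (x := (1 : ℝ))).sub hu

lemma cauchySeq_snd_of_g_le (hm : ∀ p q : Option (ℝ≥0 × X), dist p q = hatDist p q)
    {q : ℕ → ℝ≥0 × X} {c : ℝ} (hc : c < 1) (hqc : ∀ n, g (q n).1 ≤ c)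
    (hq : CauchySeq fun n => some (q n)) : CauchySeq fun n => (q n).2 := by
  rw [Metric.cauchySeq_iff] at hq ⊢
  intro ε hε
  obtain ⟨N, hN⟩ := hq (ε * (1 - c)) (mul_pos hε (by linarith))
  refine ⟨N, fun a ha b hb => lt_of_mul_lt_mul_right ?_ (by linarith : 0 ≤ 1 - c)⟩
  calc dist (q a).2 (q b).2 * (1 - c) ≤ dist (some (q a)) (some (q b)) :=
        hm _ _ ▸ dist_mul_le_hatDist (hqc a) (hqc b)
    _ < ε * (1 - c) := hN a ha b hb

lemma tendsto_some_of_tendsto (hm : ∀ p q : Option (ℝ≥0 × X), dist p q = hatDist p q)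
    {q : ℕ → ℝ≥0 × X} {s : ℝ≥0} {x : X}
    (hs : Tendsto (fun n => g (q n).1) atTop (𝓝 (g s)))
    (hx : Tendsto (fun n => (q n).2) atTop (𝓝 x)) :
    Tendsto (fun n => some (q n)) atTop (𝓝 (some (s, x))) := by
  rw [tendsto_iff_dist_tendsto_zero]
  have hbound : Tendsto (fun n => dist (q n).2 x + |g (q n).1 - g s|) atTop (𝓝 0) := by
    simpa using (tendsto_iff_dist_tendsto_zero.mp hx).add (hs.sub_const (g s)).abs
  refine squeeze_zero (fun _ => dist_nonneg) (fun n => ?_) hbound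
  rw [hm]
  exact hatDist_some_le (q n) (s, x)

lemma exists_tendsto_of_tendsto_level_lt_one
    (hm : ∀ p q : Option (ℝ≥0 × X), dist p q = hatDist p q) [CompleteSpace X]
    {u : ℕ → Option (ℝ≥0 × X)} (hu : CauchySeq u) {L : ℝ}
    (hL : Tendsto (fun n => level (u n)) atTop (𝓝 L)) (hL0 : 0 ≤ L) (hL1 : L < 1) :
    ∃ a, Tendsto u atTop (𝓝 a) := by
  obtain ⟨c, hLc, hc1⟩ := exists_between hL1
  obtain ⟨N, hN⟩ := eventually_atTop.mp (hL.eventually (gt_mem_nhds hLc))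
  have hsome : ∀ n, ∃ p, u (n + N) = some p := fun n => by
    have := hN (n + N) (Nat.le_add_left _ _)
    cases h : u (n + N) with
    | none => rw [h, level] at this; linarith
    | some p => exact ⟨p, rfl⟩
  choose q hq using hsome
  have hqL : Tendsto (fun n => g (q n).1) atTop (𝓝 L) :=
    (hL.comp (tendsto_add_atTop_nat N)).congr fun n => by
      simp only [Function.comp_apply, hq, level]
  have hqc : ∀ n, g (q n).1 ≤ c := fun n => by
    simpa only [hq, level] using (hN (n + N) (Nat.le_add_left _ _)).le
  have hqCauchy : CauchySeq fun n => some (q n) := by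
    rw [show (fun n => some (q n)) = u ∘ (· + N) from funext fun n => (hq n).symm]
    exact hu.comp_tendsto (tendsto_add_atTop_nat N)
  obtain ⟨x, hx⟩ := cauchySeq_tendsto_of_complete
    (cauchySeq_snd_of_g_le hm hc1 hqc hqCauchy)
  refine ⟨some ((L / (1 - L)).toNNReal, x), (tendsto_add_atTop_iff_nat N).mp ?_⟩
  simp only [hq]
  exact tendsto_some_of_tendsto hm (by rwa [g_toNNReal_div_one_sub hL0 hL1]) hx

end completeness

theorem stmt_6_general {X : Type*} [MetricSpace X] [CompleteSpace X]
    [m : MetricSpace (Option (ℝ≥0 × X))]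
    (hm : ∀ p q : Option (ℝ≥0 × X), dist p q = hatDist p q) :
    CompleteSpace (Option (ℝ≥0 × X)) := by
  refine Metric.complete_of_cauchySeq_tendsto fun u hu => ?_
  obtain ⟨L, hL⟩ := cauchySeq_tendsto_of_complete
    ((lipschitzWith_level hm).uniformContinuous.comp_cauchySeq hu)
  have hL0 : 0 ≤ L := ge_of_tendsto' hL fun n => level_nonneg (u n)
  rcases (le_of_tendsto' hL fun n => level_le_one (u n)).eq_or_lt with rfl | hL1
  · exact ⟨none, tendsto_none_of_tendsto_level_one hm hL⟩
  · exact exists_tendsto_of_tendsto_level_lt_one hm hu hL hL0 hL1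

/-- If `(X, ρ)` is a complete metric space with `ρ ≤ 2`, then `(X̂, ρ̂)` is
complete: every Cauchy sequence in `X̂` converges. -/
theorem stmt_6 {X : Type*} [MetricSpace X] [CompleteSpace X]
    (hρ : ∀ x y : X, dist x y ≤ 2)
    [m : MetricSpace (Option (ℝ≥0 × X))]
    (hm : ∀ p q : Option (ℝ≥0 × X), dist p q = hatDist p q) :
    CompleteSpace (Option (ℝ≥0 × X)) :=
  stmt_6_general (m := m) hm
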